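/- For the replicator system p' = p(1−p)·C₁·(G(p,q) − C_{r1}), q' = q(1−q)·C₂·(G(p,q) − C_{r2}) with C₁, C₂ > 0, G(p,q) = π₁(p,q)p₁(1−p) + π₂(p,q)p₂(1−q), and C_{r1}, C_{r2} > 0: the Jacobian at the equilibrium (1,1) equals diag(C₁·C_{r1}, C₂·C_{r2}) (using G(1,1) = 0), which has positive trace and positive determinant; hence (1,1) is linearly unstable. -/

import Mathlib

/-- The Jacobian of the replicator system at (1,1) equals diag(C₁C_{r1}, C₂C_{r2})
(using G(1,1)=0), which has positive trace and determinant; hence (1,1) is linearly unstable. -/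
theorem stmt4 (π₁ π₂ : ℝ × ℝ → ℝ) (p₁ p₂ C₁ C₂ Cr1 Cr2 : ℝ)
    (hC₁ : 0 < C₁) (hC₂ : 0 < C₂) (hCr1 : 0 < Cr1) (hCr2 : 0 < Cr2)
    (hπ₁ : DifferentiableAt ℝ π₁ (1, 1)) (hπ₂ : DifferentiableAt ℝ π₂ (1, 1))
    (G : ℝ × ℝ → ℝ)
    (hG : ∀ x : ℝ × ℝ, G x = π₁ x * p₁ * (1 - x.1) + π₂ x * p₂ * (1 - x.2)) :
    G (1, 1) = 0 ∧
    ∃ L : ℝ × ℝ →L[ℝ] ℝ × ℝ,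
      HasFDerivAt (fun x : ℝ × ℝ =>
        (x.1 * (1 - x.1) * C₁ * (G x - Cr1), x.2 * (1 - x.2) * C₂ * (G x - Cr2))) L (1, 1) ∧
      (∀ v : ℝ × ℝ, L v = (C₁ * Cr1 * v.1, C₂ * Cr2 * v.2)) ∧
      0 < C₁ * Cr1 + C₂ * Cr2 ∧ 0 < C₁ * Cr1 * (C₂ * Cr2) := by
  have hG0 : G (1, 1) = 0 := by rw [hG]; simp
  refine ⟨hG0, ?_⟩
  have hGd : DifferentiableAt ℝ G (1, 1) := by
    have : G = fun x : ℝ × ℝ => π₁ x * p₁ * (1 - x.1) + π₂ x * p₂ * (1 - x.2) := funext hG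
    rw [this]; fun_prop
  have hB : HasFDerivAt G (fderiv ℝ G (1, 1)) (1, 1) := hGd.hasFDerivAt
  set B := fderiv ℝ G (1, 1) with hBdef
  have hfst : HasFDerivAt (fun x : ℝ × ℝ => x.1) (ContinuousLinearMap.fst ℝ ℝ ℝ) (1, 1) :=
    hasFDerivAt_fst
  have hsnd : HasFDerivAt (fun x : ℝ × ℝ => x.2) (ContinuousLinearMap.snd ℝ ℝ ℝ) (1, 1) :=
    hasFDerivAt_snd
  have h1m : HasFDerivAt (fun x : ℝ × ℝ => 1 - x.1) (-(ContinuousLinearMap.fst ℝ ℝ ℝ)) (1, 1) :=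
    hfst.const_sub 1
  have h2m : HasFDerivAt (fun x : ℝ × ℝ => 1 - x.2) (-(ContinuousLinearMap.snd ℝ ℝ ℝ)) (1, 1) :=
    hsnd.const_sub 1
  have hu1 := (hfst.mul h1m)
  have hu2 := (hsnd.mul h2m)
  have hf1 := ((hu1.mul_const C₁).mul (hB.sub_const Cr1))
  have hf2 := ((hu2.mul_const C₂).mul (hB.sub_const Cr2))
  refine ⟨_, hf1.prodMk hf2, ?_, ?_, ?_⟩
  · intro v
    have hG0' : G (1 : ℝ × ℝ) = 0 := hG0
    simp [hG0, hG0', ContinuousLinearMap.add_apply, ContinuousLinearMap.smul_apply,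
      ContinuousLinearMap.neg_apply, Prod.ext_iff]
    constructor <;> ring
  · positivity
  · positivity
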